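/- Let h > 0, μ > 0, φ ∈ ℝ and set ε = μh²/4. Let θ : ℤ → ℝ satisfy sin((θₙ₊₁ − 2θₙ + θₙ₋₁)/4) + ε sin((θₙ₊₁ + 2θₙ + θₙ₋₁)/4 − φ) = 0 for all n ∈ ℤ. Let Λ = cos((θₙ₊₁ − θₙ)/2) + ε cos((θₙ₊₁ + θₙ)/2 − φ) (independent of n), and assume Λ ≠ 0 and cos((θₙ₊₁ − θₙ₋₁)/4) ≠ 0 for all n. Set Θₙ = (θₙ₊₁ + θₙ)/2, κₙ = (2/h) tan((θₙ₊₁ − θₙ₋₁)/4), let γ : ℤ → ℝ² satisfy γₙ₊₁ = γₙ + h·(cos Θₙ, sin Θₙ), and define uₙ = ⟨(sin φ, −cos φ), γₙ⟩. Then for all n ∈ ℤ: (κₙ₊₁ − κₙ)/h = −(μ/Λ) sin(Θₙ − φ) and (uₙ₊₁ − uₙ)/h = −sin(Θₙ − φ); in particular κₙ₊₁ − κₙ = (μ/Λ)(uₙ₊₁ − uₙ). -/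

import Mathlib

/-!
With `s = (θₙ₊₁ - θₙ)/2` and `T = Θₙ - φ`, expanding the pendulum equations at `n + 1` and at
`n` by the addition formulas and eliminating `cos s + ε cos T = Λ` gives
`tan ((θₙ₊₂ - θₙ)/4) = (sin s - ε sin T)/Λ` and `tan ((θₙ₊₁ - θₙ₋₁)/4) = (sin s + ε sin T)/Λ`.
Hence `κₙ₊₁ - κₙ = (2/h)(-2ε sin T/Λ) = -(μh/Λ) sin T`, while `uₙ₊₁ - uₙ = -h sin T` is the
addition formula for `sin (Θₙ - φ)`.
-/

open Real

namespace DiscreteElastica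

variable {ε φ Λ : ℝ}

theorem tan_eq_of_sin_sub_add_mul_sin_add {x s T : ℝ}
    (hp : sin (x - s) + ε * sin (x + T) = 0) (hΛ : cos s + ε * cos T = Λ) (hΛ0 : Λ ≠ 0)
    (hx : cos x ≠ 0) : tan x = (sin s - ε * sin T) / Λ := by
  rw [sin_sub, sin_add] at hp
  rw [tan_eq_sin_div_cos, div_eq_div_iff hx hΛ0]
  linear_combination hp - sin x * hΛ

theorem tan_quarter_eq_of_pendulum_forward {a b c : ℝ}
    (hp : sin ((a - 2 * b + c) / 4) + ε * sin ((a + 2 * b + c) / 4 - φ) = 0)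
    (hΛ : cos ((b - c) / 2) + ε * cos ((b + c) / 2 - φ) = Λ) (hΛ0 : Λ ≠ 0)
    (hcos : cos ((a - c) / 4) ≠ 0) :
    tan ((a - c) / 4) = (sin ((b - c) / 2) - ε * sin ((b + c) / 2 - φ)) / Λ := by
  refine tan_eq_of_sin_sub_add_mul_sin_add ?_ hΛ hΛ0 hcos
  convert hp using 4 <;> ring

theorem tan_quarter_eq_of_pendulum_backward {a b c : ℝ}
    (hp : sin ((a - 2 * b + c) / 4) + ε * sin ((a + 2 * b + c) / 4 - φ) = 0)
    (hΛ : cos ((a - b) / 2) + ε * cos ((a + b) / 2 - φ) = Λ) (hΛ0 : Λ ≠ 0)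
    (hcos : cos ((a - c) / 4) ≠ 0) :
    tan ((a - c) / 4) = (sin ((a - b) / 2) + ε * sin ((a + b) / 2 - φ)) / Λ := by
  have key := tan_eq_of_sin_sub_add_mul_sin_add (x := -((a - c) / 4)) (s := -((a - b) / 2))
    (T := (a + b) / 2 - φ) (by convert hp using 4 <;> ring) (by rwa [cos_neg]) hΛ0
    (by rwa [cos_neg])
  rw [tan_neg, sin_neg] at key
  linear_combination -key

theorem sin_mul_fst_sub_cos_mul_snd_add_smul (p : ℝ × ℝ) (r Θ φ : ℝ) :
    sin φ * (p + r • (cos Θ, sin Θ)).1 - cos φ * (p + r • (cos Θ, sin Θ)).2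
      = sin φ * p.1 - cos φ * p.2 - r * sin (Θ - φ) := by
  simp only [Prod.fst_add, Prod.snd_add, Prod.smul_fst, Prod.smul_snd, smul_eq_mul, sin_sub]
  ring

end DiscreteElastica

open DiscreteElastica in
theorem discrete_elastica_difference_identities_general (h μ φ : ℝ) (hh : 0 < h)
    (ε : ℝ) (hε : ε = μ * h ^ 2 / 4)
    (θ : ℤ → ℝ)
    (hpend : ∀ n : ℤ,
      Real.sin ((θ (n + 1) - 2 * θ n + θ (n - 1)) / 4)
        + ε * Real.sin ((θ (n + 1) + 2 * θ n + θ (n - 1)) / 4 - φ) = 0)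
    (Λ : ℝ)
    (hΛ : ∀ n : ℤ,
      Real.cos ((θ (n + 1) - θ n) / 2)
        + ε * Real.cos ((θ (n + 1) + θ n) / 2 - φ) = Λ)
    (hΛ0 : Λ ≠ 0)
    (hcos : ∀ n : ℤ, Real.cos ((θ (n + 1) - θ (n - 1)) / 4) ≠ 0)
    (Θ : ℤ → ℝ) (hΘ : ∀ n : ℤ, Θ n = (θ (n + 1) + θ n) / 2)
    (κ : ℤ → ℝ) (hκ : ∀ n : ℤ, κ n = 2 / h * Real.tan ((θ (n + 1) - θ (n - 1)) / 4))
    (γ : ℤ → ℝ × ℝ)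
    (hγ : ∀ n : ℤ, γ (n + 1) = γ n + h • ((Real.cos (Θ n), Real.sin (Θ n)) : ℝ × ℝ))
    (u : ℤ → ℝ) (hu : ∀ n : ℤ, u n = Real.sin φ * (γ n).1 - Real.cos φ * (γ n).2) :
    ∀ n : ℤ,
      (κ (n + 1) - κ n) / h = -(μ / Λ) * Real.sin (Θ n - φ) ∧
      (u (n + 1) - u n) / h = -Real.sin (Θ n - φ) ∧
      κ (n + 1) - κ n = μ / Λ * (u (n + 1) - u n) := by
  intro n
  have hp := hpend (n + 1)
  have hc := hcos (n + 1)
  have hk := hκ (n + 1)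
  simp only [add_sub_cancel_right] at hp hc hk
  have h_fwd := tan_quarter_eq_of_pendulum_forward hp (hΛ n) hΛ0 hc
  have h_bwd := tan_quarter_eq_of_pendulum_backward (hpend n) (hΛ n) hΛ0 (hcos n)
  have hκ_step : κ (n + 1) - κ n = -(μ * h / Λ) * sin (Θ n - φ) := by
    rw [hk, hκ n, h_fwd, h_bwd, hΘ, hε]
    field_simp
    ring
  have hu_step : u (n + 1) - u n = -h * sin (Θ n - φ) := by
    rw [hu, hu, hγ, sin_mul_fst_sub_cos_mul_snd_add_smul]
    ring
  refine ⟨?_, ?_, ?_⟩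
  · rw [hκ_step]; field_simp
  · rw [hu_step]; field_simp
  · rw [hκ_step, hu_step]; ring

/-- Difference identities for a general discrete elastica segment:
`(κₙ₊₁ − κₙ)/h = −(μ/Λ) sin(Θₙ − φ)` and `(uₙ₊₁ − uₙ)/h = −sin(Θₙ − φ)`. -/
theorem discrete_elastica_difference_identities (h μ φ : ℝ) (hh : 0 < h) (hμ : 0 < μ)
    (ε : ℝ) (hε : ε = μ * h ^ 2 / 4)
    (θ : ℤ → ℝ)
    (hpend : ∀ n : ℤ,
      Real.sin ((θ (n + 1) - 2 * θ n + θ (n - 1)) / 4)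
        + ε * Real.sin ((θ (n + 1) + 2 * θ n + θ (n - 1)) / 4 - φ) = 0)
    (Λ : ℝ)
    (hΛ : ∀ n : ℤ,
      Real.cos ((θ (n + 1) - θ n) / 2)
        + ε * Real.cos ((θ (n + 1) + θ n) / 2 - φ) = Λ)
    (hΛ0 : Λ ≠ 0)
    (hcos : ∀ n : ℤ, Real.cos ((θ (n + 1) - θ (n - 1)) / 4) ≠ 0)
    (Θ : ℤ → ℝ) (hΘ : ∀ n : ℤ, Θ n = (θ (n + 1) + θ n) / 2)
    (κ : ℤ → ℝ) (hκ : ∀ n : ℤ, κ n = 2 / h * Real.tan ((θ (n + 1) - θ (n - 1)) / 4))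
    (γ : ℤ → ℝ × ℝ)
    (hγ : ∀ n : ℤ, γ (n + 1) = γ n + h • ((Real.cos (Θ n), Real.sin (Θ n)) : ℝ × ℝ))
    (u : ℤ → ℝ) (hu : ∀ n : ℤ, u n = Real.sin φ * (γ n).1 - Real.cos φ * (γ n).2) :
    ∀ n : ℤ,
      (κ (n + 1) - κ n) / h = -(μ / Λ) * Real.sin (Θ n - φ) ∧
      (u (n + 1) - u n) / h = -Real.sin (Θ n - φ) ∧
      κ (n + 1) - κ n = μ / Λ * (u (n + 1) - u n) :=
  discrete_elastica_difference_identities_general h μ φ hh ε hε θ hpend Λ hΛ hΛ0 hcos Θ hΘ κ hκ γ hγ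
    u hu
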